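/- In a group with elements x₁, x₂, x₃ satisfying (x₁x₂)² = (x₂x₁)², [x₃, x₁⁻¹x₂x₁] = e, and x₂⁻¹x₃⁻¹x₁x₃x₂ = x₁ (i.e. [x₁, x₃x₂] = e), the relation (x₂x₁x₂⁻¹x₃)² = (x₃x₂x₁x₂⁻¹)² implies (x₁x₃)² = (x₃x₁)². -/
import Mathlib


/-- Given `(x₁x₂)² = (x₂x₁)²`, `[x₃, x₁⁻¹x₂x₁] = e`, `x₂⁻¹x₃⁻¹x₁x₃x₂ = x₁`, and
`(x₂x₁x₂⁻¹x₃)² = (x₃x₂x₁x₂⁻¹)²`, it follows that `(x₁x₃)² = (x₃x₁)²`. -/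
theorem stmt_10 {G : Type*} [Group G] (x₁ x₂ x₃ : G)
    (h12 : (x₁ * x₂) ^ 2 = (x₂ * x₁) ^ 2)
    (hcom : x₃ * (x₁⁻¹ * x₂ * x₁) = (x₁⁻¹ * x₂ * x₁) * x₃)
    (hproj : x₂⁻¹ * x₃⁻¹ * x₁ * x₃ * x₂ = x₁)
    (htan : (x₂ * x₁ * x₂⁻¹ * x₃) ^ 2 = (x₃ * x₂ * x₁ * x₂⁻¹) ^ 2) :
    (x₁ * x₃) ^ 2 = (x₃ * x₁) ^ 2 := by
  have hy : x₂ * x₁ * x₂⁻¹ = x₃⁻¹ * x₁ * x₃ := by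
    calc x₂ * x₁ * x₂⁻¹ = x₂ * (x₂⁻¹ * x₃⁻¹ * x₁ * x₃ * x₂) * x₂⁻¹ := by rw [hproj]
    _ = x₃⁻¹ * x₁ * x₃ := by group
  have hw : x₂ * x₁ * x₂⁻¹ * x₃ = x₃⁻¹ * (x₁ * x₃ * x₃) := by rw [hy]; group
  have hz : x₃ * x₂ * x₁ * x₂⁻¹ = x₁ * x₃ := by
    calc x₃ * x₂ * x₁ * x₂⁻¹ = x₃ * (x₂ * x₁ * x₂⁻¹) := by group
    _ = x₁ * x₃ := by rw [hy]; group
  rw [hw, hz] at htan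
  simp only [pow_two, mul_assoc, mul_inv_cancel_left, inv_mul_cancel_left] at htan ⊢
  have key := congrArg (x₃ * ·) htan
  simp only [mul_assoc, mul_inv_cancel_left] at key
  apply mul_right_cancel (b := x₃)
  simpa [mul_assoc] using key
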